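/- Linear ODE limit under Scaling regime 1 (Theorem 4.2, second case). Fix d ≥ 1, an input x ∈ ℝ^d, an activation σ ∈ C³(ℝ,ℝ) with σ(0)=0, σ'(0)=1, bounded third derivative, and σ Lipschitz. Let α, β > 0 with α + β = 1, and let Ā : [0,1] → ℝ^{d×d} and b̄ : [0,1] → ℝ^d be continuous functions for which there exist M > 0 and κ > 0 such that ‖Ā_t − Ā_s‖ + ‖b̄_t − b̄_s‖ ≤ M |t−s|^{κ/2} for all s,t ∈ [0,1]. For each L ∈ ℕ define the hidden states h_0^{(L)} = x and h_{k+1}^{(L)} = h_k^{(L)} + L^{-α} σ_d(L^{-β}(Ā_{k/L} h_k^{(L)} + b̄_{k/L})) for k = 0,…,L−1, and the piecewise-constant interpolation H̄_t^{(L)} = h_k^{(L)} for k/L ≤ t < (k+1)/L (with H̄_1^{(L)} = h_L^{(L)}). Let H : [0,1] → ℝ^d be the solution of the linear ODE dH_t/dt = Ā_t H_t + b̄_t with H_0 = x. Then lim_{L→∞} sup_{0 ≤ t ≤ 1} ‖H_t − H̄_t^{(L)}‖ = 0. -/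

import Mathlib

open MeasureTheory Filter Set

/-- Componentwise application of a scalar function to a vector in `ℝ^d`. -/
noncomputable def sigd {d : ℕ} (σ : ℝ → ℝ) (z : EuclideanSpace ℝ (Fin d)) :
    EuclideanSpace ℝ (Fin d) :=
  WithLp.toLp 2 (fun i => σ (z i))

/-! Since `σ(y) = y + O(y²)` near `0` and `α + β = 1`, the residual update
`L^{-α} σ_d(L^{-β} u)` is the explicit Euler increment `u / L` up to an error `O(L^{-1-β})`.
The network is thus a perturbed Euler scheme for `H' = Ā H + b̄`. A discrete Grönwall argument
bounds the error at the grid points `k / L` by `exp (sup ‖Ā‖)` times the local error per unit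
time, which tends to zero by uniform continuity of `H'`; the same bound keeps the hidden states
within distance `1` of `H`, where the quadratic estimate for `σ` applies. -/

theorem exists_abs_sub_self_le_mul_sq {σ : ℝ → ℝ} (hσ : ContDiff ℝ 2 σ) (h0 : σ 0 = 0)
    (h1 : deriv σ 0 = 1) : ∃ C, ∀ y, |y| ≤ 1 → |σ y - y| ≤ C * y ^ 2 := by
  have hσ' : ContDiff ℝ 1 (deriv σ) := hσ.deriv'
  obtain ⟨C, hC⟩ := isCompact_Icc.exists_bound_of_continuousOn
    ((hσ'.continuous_deriv le_rfl).continuousOn (s := Icc (-1 : ℝ) 1))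
  have hσ'_sub : ∀ s ∈ Icc (-1 : ℝ) 1, |deriv σ s - 1| ≤ C * |s| := fun s hs => by
    simpa [h1] using (convex_Icc (-1 : ℝ) 1).norm_image_sub_le_of_norm_deriv_le
      (fun r _ => (hσ'.differentiable one_ne_zero).differentiableAt) hC
      (by norm_num : (0 : ℝ) ∈ Icc (-1) 1) hs
  have hC0 : 0 ≤ C := (norm_nonneg _).trans (hC 0 (by norm_num))
  refine ⟨C, fun y hy => ?_⟩
  have hderiv : ∀ r ∈ Icc (-|y|) |y|,
      HasDerivWithinAt (fun s => σ s - s) (deriv σ r - 1) (Icc (-|y|) |y|) r := fun r _ =>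
    (((hσ.differentiable two_ne_zero) r).hasDerivAt.sub (hasDerivAt_id r)).hasDerivWithinAt
  have hbound : ∀ r ∈ Icc (-|y|) |y|, ‖deriv σ r - 1‖ ≤ C * |y| := fun r hr => by
    have hr' : |r| ≤ |y| := abs_le.2 hr
    exact (hσ'_sub r (abs_le.1 (hr'.trans hy))).trans (mul_le_mul_of_nonneg_left hr' hC0)
  have := (convex_Icc (-|y|) |y|).norm_image_sub_le_of_norm_hasDerivWithin_le hderiv hbound
    (x := 0) (by simp) ⟨neg_abs_le y, le_abs_self y⟩
  simpa [h0, mul_assoc, ← sq] using this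

theorem norm_sigd_sub_le {d : ℕ} {σ : ℝ → ℝ} {C : ℝ}
    (hσ : ∀ y, |y| ≤ 1 → |σ y - y| ≤ C * y ^ 2) {z : EuclideanSpace ℝ (Fin d)} (hz : ‖z‖ ≤ 1) :
    ‖sigd σ z - z‖ ≤ C * ‖z‖ ^ 2 := by
  have hC : 0 ≤ C := by simpa using (abs_nonneg _).trans (hσ 1 (by norm_num))
  have hcoord : ∀ i, |σ (z i) - z i| ≤ C * z i ^ 2 := fun i =>
    hσ _ (((Real.norm_eq_abs _).symm.trans_le (PiLp.norm_apply_le z i)).trans hz)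
  refine le_of_sq_le_sq ?_ (by positivity)
  calc ‖sigd σ z - z‖ ^ 2 = ∑ i, (σ (z i) - z i) ^ 2 := by
        simp [EuclideanSpace.norm_sq_eq, sigd]
    _ ≤ ∑ i, (C * z i ^ 2) ^ 2 := Finset.sum_le_sum fun i _ =>
        sq_le_sq' (neg_le_of_abs_le (hcoord i)) (le_of_abs_le (hcoord i))
    _ = C ^ 2 * ∑ i, (z i ^ 2) ^ 2 := by rw [Finset.mul_sum]; ring_nf
    _ ≤ C ^ 2 * (∑ i, z i ^ 2) ^ 2 := by
        gcongr; exact Finset.sum_sq_le_sq_sum_of_nonneg fun i _ => sq_nonneg _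
    _ = (C * ‖z‖ ^ 2) ^ 2 := by simp [EuclideanSpace.norm_sq_eq, mul_pow]

theorem norm_sub_sub_smul_le_of_hasDerivWithinAt {E : Type*} [NormedAddCommGroup E]
    [NormedSpace ℝ E] {f f' : ℝ → E} {s t η : ℝ} (hst : s ≤ t)
    (hf : ∀ r ∈ Icc s t, HasDerivWithinAt f (f' r) (Icc s t) r)
    (hη : ∀ r ∈ Icc s t, ‖f' r - f' s‖ ≤ η) :
    ‖f t - f s - (t - s) • f' s‖ ≤ η * (t - s) := by
  have hg : ∀ r ∈ Icc s t,
      HasDerivWithinAt (fun r => f r - r • f' s) (f' r - f' s) (Icc s t) r := fun r hr => by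
    simpa only [id_eq, one_smul] using
      (hf r hr).fun_sub ((hasDerivWithinAt_id r (Icc s t)).smul_const (f' s))
  have := (convex_Icc s t).norm_image_sub_le_of_norm_hasDerivWithin_le hg hη
    (left_mem_Icc.2 hst) (right_mem_Icc.2 hst)
  rwa [Real.norm_eq_abs, abs_of_nonneg (sub_nonneg.2 hst), sub_sub_sub_comm, ← sub_smul] at this

theorem norm_sub_residual_step_le {d : ℕ} {σ : ℝ → ℝ} {C : ℝ}
    (hσ : ∀ y, |y| ≤ 1 → |σ y - y| ≤ C * y ^ 2) {p q τ η D : ℝ} (hp : 0 ≤ p) (hq : 0 ≤ q)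
    (hpq : p * q = τ) (A : EuclideanSpace ℝ (Fin d) →L[ℝ] EuclideanSpace ℝ (Fin d))
    (b y H₀ H₁ : EuclideanSpace ℝ (Fin d)) (hD : ‖A y + b‖ ≤ D) (hqD : q * D ≤ 1)
    (hH : ‖H₁ - H₀ - τ • (A H₀ + b)‖ ≤ τ * η) :
    ‖H₁ - (y + p • sigd σ (q • (A y + b)))‖
      ≤ (1 + τ * ‖A‖) * ‖H₀ - y‖ + τ * (η + C * q * D ^ 2) := by
  set z := q • (A y + b)
  have hz : ‖z‖ ≤ q * D := by
    rw [norm_smul, Real.norm_of_nonneg hq]; exact mul_le_mul_of_nonneg_left hD hq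
  have hC : 0 ≤ C := by simpa using (abs_nonneg _).trans (hσ 1 (by norm_num))
  -- the scalings are balanced so that `p • z` is exactly the Euler increment `τ • (A y + b)`
  have hsplit : H₁ - (y + p • sigd σ z)
      = (H₁ - H₀ - τ • (A H₀ + b)) + ((H₀ - y) + τ • A (H₀ - y)) - p • (sigd σ z - z) := by
    rw [← hpq]; simp only [z, map_sub]; module
  have hA : ‖(H₀ - y) + τ • A (H₀ - y)‖ ≤ (1 + τ * ‖A‖) * ‖H₀ - y‖ := by
    have hτ : 0 ≤ τ := hpq ▸ mul_nonneg hp hq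
    calc _ ≤ ‖H₀ - y‖ + τ * (‖A‖ * ‖H₀ - y‖) := by
          grw [norm_add_le, norm_smul, Real.norm_of_nonneg hτ, A.le_opNorm]
      _ = _ := by ring
  have hσz : ‖p • (sigd σ z - z)‖ ≤ τ * (C * q * D ^ 2) := by
    rw [norm_smul, Real.norm_of_nonneg hp]
    calc p * ‖sigd σ z - z‖ ≤ p * (C * (q * D) ^ 2) := by
          grw [norm_sigd_sub_le hσ (hz.trans hqD), hz]
      _ = τ * (C * q * D ^ 2) := by rw [← hpq]; ring
  calc _ ≤ τ * η + (1 + τ * ‖A‖) * ‖H₀ - y‖ + τ * (C * q * D ^ 2) := by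
        grw [hsplit, norm_sub_le, norm_add_le, hH, hA, hσz]
    _ = _ := by ring

theorem one_add_div_pow_le_exp {a : ℝ} (ha : 0 ≤ a) {k L : ℕ} (hk : k ≤ L) :
    (1 + a / L) ^ k ≤ Real.exp a := by
  calc (1 + a / L) ^ k ≤ Real.exp (a / L) ^ k := by
        gcongr; linarith [Real.add_one_le_exp (a / L)]
    _ = Real.exp (k * (a / L)) := (Real.exp_nat_mul _ k).symm
    _ ≤ Real.exp a := by
        gcongr
        rcases Nat.eq_zero_or_pos L with rfl | hL
        · simp [ha]
        · rw [mul_div_left_comm]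
          exact mul_le_of_le_one_right ha (div_le_one_of_le₀ (by exact_mod_cast hk) (by positivity))

theorem le_mul_exp_of_forall_succ_le {e : ℕ → ℝ} {L : ℕ} {a δ : ℝ} (ha : 0 ≤ a) (hδ : 0 ≤ δ)
    (he0 : e 0 = 0)
    (hstep : ∀ k < L, e k ≤ δ * Real.exp a → e (k + 1) ≤ (1 + a / L) * e k + δ / L) :
    ∀ k ≤ L, e k ≤ δ * Real.exp a := by
  have hgrowth : ∀ k ≤ L, k / L * δ * (1 + a / L) ^ k ≤ δ * Real.exp a := fun k hk => by
    have hkL : (k : ℝ) / L ≤ 1 := div_le_one_of_le₀ (by exact_mod_cast hk) (by positivity)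
    calc k / L * δ * (1 + a / L) ^ k ≤ 1 * δ * Real.exp a := by
          gcongr; exact one_add_div_pow_le_exp ha hk
      _ = δ * Real.exp a := by rw [one_mul]
  suffices h : ∀ k ≤ L, e k ≤ k / L * δ * (1 + a / L) ^ k from
    fun k hk => (h k hk).trans (hgrowth k hk)
  intro k
  induction k with
  | zero => simp [he0]
  | succ k ih =>
    intro hk
    have ihk := ih (by omega)
    have hone : 1 ≤ (1 + a / L) ^ (k + 1) := one_le_pow₀ (by simp; positivity)
    calc e (k + 1) ≤ (1 + a / L) * (k / L * δ * (1 + a / L) ^ k) + δ / L := by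
          grw [hstep k hk (ihk.trans (hgrowth k (by omega))), ihk]
      _ ≤ (1 + a / L) * (k / L * δ * (1 + a / L) ^ k) + δ / L * (1 + a / L) ^ (k + 1) := by
          gcongr; exact le_mul_of_one_le_right (by positivity) hone
      _ = ((k + 1 : ℕ) : ℝ) / L * δ * (1 + a / L) ^ (k + 1) := by push_cast; ring

theorem grid_mem_Icc {k L : ℕ} (hk : k ≤ L) : (k : ℝ) / L ∈ Icc (0 : ℝ) 1 :=
  ⟨by positivity, div_le_one_of_le₀ (by exact_mod_cast hk) (Nat.cast_nonneg L)⟩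

theorem floor_mul_le_and_abs_sub_le {L : ℕ} (hL : 0 < L) {t : ℝ} (ht : t ∈ Icc (0 : ℝ) 1) :
    ⌊(L : ℝ) * t⌋₊ ≤ L ∧ |t - ⌊(L : ℝ) * t⌋₊ / L| ≤ 1 / L := by
  have hL' : (0 : ℝ) < L := by exact_mod_cast hL
  have hLt : 0 ≤ (L : ℝ) * t := mul_nonneg hL'.le ht.1
  refine ⟨Nat.floor_le_of_le (mul_le_of_le_one_right hL'.le ht.2), ?_⟩
  have hfloor := Nat.floor_le hLt
  have hfloor' := Nat.lt_floor_add_one ((L : ℝ) * t)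
  rw [show t - ⌊(L : ℝ) * t⌋₊ / L = (L * t - ⌊(L : ℝ) * t⌋₊) / L by field_simp, abs_div,
    abs_of_pos hL', abs_of_nonneg (by linarith)]
  gcongr
  linarith

theorem ContinuousOn.eventually_norm_sub_le {E : Type*} [NormedAddCommGroup E] {f : ℝ → E}
    {a b : ℝ} (hf : ContinuousOn f (Icc a b)) {η : ℝ} (hη : 0 < η) :
    ∀ᶠ L : ℕ in atTop, ∀ r ∈ Icc a b, ∀ s ∈ Icc a b, |r - s| ≤ 1 / L → ‖f r - f s‖ ≤ η := by
  obtain ⟨δ, hδ, hfδ⟩ := Metric.uniformContinuousOn_iff_le.1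
    (isCompact_Icc.uniformContinuousOn_of_continuous hf) η hη
  filter_upwards [tendsto_one_div_atTop_nhds_zero_nat.eventually_le_const hδ]
    with L hL r hr s hs hrs
  simpa [dist_eq_norm] using hfδ r hr s hs (by rw [Real.dist_eq]; exact hrs.trans hL)

section ResidualNetwork

variable {d : ℕ} {σ : ℝ → ℝ} {C α β : ℝ}
  {A : ℝ → EuclideanSpace ℝ (Fin d) →L[ℝ] EuclideanSpace ℝ (Fin d)}
  {b H : ℝ → EuclideanSpace ℝ (Fin d)}

theorem norm_sub_grid_le (hσ : ∀ y, |y| ≤ 1 → |σ y - y| ≤ C * y ^ 2) (hαβ : α + β = 1)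
    (hH : ∀ t ∈ Icc (0 : ℝ) 1, HasDerivAt H (A t (H t) + b t) t)
    {L : ℕ} (hL : 0 < L) {h : ℕ → EuclideanSpace ℝ (Fin d)} (hh0 : h 0 = H 0)
    (hrec : ∀ k < L, h (k + 1) = h k + ((L : ℝ) ^ (-α)) •
      sigd σ (((L : ℝ) ^ (-β)) • (A ((k : ℝ) / L) (h k) + b ((k : ℝ) / L))))
    {CA D η : ℝ} (hA : ∀ t ∈ Icc (0 : ℝ) 1, ‖A t‖ ≤ CA)
    (hD : ∀ t ∈ Icc (0 : ℝ) 1, ∀ y, ‖H t - y‖ ≤ 1 → ‖A t y + b t‖ ≤ D)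
    (hF : ∀ r ∈ Icc (0 : ℝ) 1, ∀ s ∈ Icc (0 : ℝ) 1, |r - s| ≤ 1 / L →
      ‖A r (H r) + b r - (A s (H s) + b s)‖ ≤ η)
    (hqD : (L : ℝ) ^ (-β) * D ≤ 1)
    (hsmall : (η + C * (L : ℝ) ^ (-β) * D ^ 2) * Real.exp CA ≤ 1) :
    ∀ k ≤ L, ‖H (k / L) - h k‖ ≤ (η + C * (L : ℝ) ^ (-β) * D ^ 2) * Real.exp CA := by
  have hL' : (0 : ℝ) < L := by exact_mod_cast hL
  have hq : 0 ≤ (L : ℝ) ^ (-β) := Real.rpow_nonneg hL'.le _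
  have hp : 0 ≤ (L : ℝ) ^ (-α) := Real.rpow_nonneg hL'.le _
  have hpq : (L : ℝ) ^ (-α) * (L : ℝ) ^ (-β) = 1 / L := by
    rw [← Real.rpow_add hL', ← neg_add, hαβ, Real.rpow_neg_one, one_div]
  have hCA : 0 ≤ CA := (norm_nonneg _).trans (hA 0 (by simp))
  have hη : 0 ≤ η := (norm_nonneg _).trans (hF 0 (by simp) 0 (by simp) (by simp))
  have hC : 0 ≤ C := by simpa using (abs_nonneg _).trans (hσ 1 (by norm_num))
  refine le_mul_exp_of_forall_succ_le hCA (by positivity) (by simp [hh0]) fun k hk hek => ?_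
  set s : ℝ := k / L
  have hs : s ∈ Icc (0 : ℝ) 1 := grid_mem_Icc hk.le
  have ht : ((k + 1 : ℕ) : ℝ) / L ∈ Icc (0 : ℝ) 1 := grid_mem_Icc hk
  have hts : ((k + 1 : ℕ) : ℝ) / L - s = 1 / L := by push_cast; ring
  have hsub : Icc s (((k + 1 : ℕ) : ℝ) / L) ⊆ Icc 0 1 := Icc_subset_Icc hs.1 ht.2
  have htrunc := norm_sub_sub_smul_le_of_hasDerivWithinAt (by linarith [hts, one_div_pos.2 hL'])
    (fun r hr => (hH r (hsub hr)).hasDerivWithinAt)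
    (fun r hr => hF r (hsub hr) s hs (by rw [abs_of_nonneg (by linarith [hr.1])]; linarith [hr.2]))
  rw [hts, mul_comm] at htrunc
  calc _ ≤ (1 + 1 / L * ‖A s‖) * ‖H s - h k‖ + 1 / L * (η + C * (L : ℝ) ^ (-β) * D ^ 2) := by
        rw [hrec k hk]
        exact norm_sub_residual_step_le hσ hp hq hpq _ _ _ _ _
          (hD s hs _ (hek.trans hsmall)) hqD htrunc
    _ ≤ (1 + CA / L) * ‖H s - h k‖ + (η + C * (L : ℝ) ^ (-β) * D ^ 2) / L := by
        rw [one_div_mul_eq_div, one_div_mul_eq_div]; gcongr; exact hA s hs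

theorem eventually_norm_sub_floor_le (hσ : ∀ y, |y| ≤ 1 → |σ y - y| ≤ C * y ^ 2)
    (hαβ : α + β = 1) (hβ : 0 < β) (hAc : ContinuousOn A (Icc (0 : ℝ) 1))
    (hbc : ContinuousOn b (Icc (0 : ℝ) 1))
    (hH : ∀ t ∈ Icc (0 : ℝ) 1, HasDerivAt H (A t (H t) + b t) t)
    {h : ℕ → ℕ → EuclideanSpace ℝ (Fin d)} (hh0 : ∀ L, h L 0 = H 0)
    (hrec : ∀ L : ℕ, ∀ k < L, h L (k + 1) = h L k + ((L : ℝ) ^ (-α)) •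
      sigd σ (((L : ℝ) ^ (-β)) • (A ((k : ℝ) / L) (h L k) + b ((k : ℝ) / L))))
    {ε : ℝ} (hε : 0 < ε) :
    ∀ᶠ L : ℕ in atTop, ∀ t ∈ Icc (0 : ℝ) 1, ‖H t - h L ⌊(L : ℝ) * t⌋₊‖ ≤ ε := by
  have hHc : ContinuousOn H (Icc 0 1) := fun t ht => (hH t ht).continuousAt.continuousWithinAt
  have hFc : ContinuousOn (fun t => A t (H t) + b t) (Icc 0 1) := (hAc.clm_apply hHc).add hbc
  obtain ⟨CA, hCA⟩ := isCompact_Icc.exists_bound_of_continuousOn hAc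
  obtain ⟨CF, hCF⟩ := isCompact_Icc.exists_bound_of_continuousOn hFc
  have hCA0 : 0 ≤ CA := (norm_nonneg _).trans (hCA 0 (by simp))
  have hD : ∀ t ∈ Icc (0 : ℝ) 1, ∀ y, ‖H t - y‖ ≤ 1 → ‖A t y + b t‖ ≤ CF + CA := by
    intro t ht y hy
    calc ‖A t y + b t‖ = ‖(A t (H t) + b t) - A t (H t - y)‖ := by rw [map_sub]; abel_nf
      _ ≤ CF + CA * 1 := by grw [norm_sub_le, hCF t ht, (A t).le_opNorm, hCA t ht, hy]
      _ = CF + CA := by rw [mul_one]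
  set e := Real.exp CA
  set η := min ε 1 / (2 * (1 + 2 * e))
  have hη : 0 < η := by positivity
  have hηe : η * (1 + 2 * e) = min ε 1 / 2 := by
    have : 0 < 1 + 2 * e := by positivity
    simp only [η]; field_simp
  have hq : Tendsto (fun L : ℕ => (L : ℝ) ^ (-β)) atTop (nhds 0) :=
    (tendsto_rpow_neg_atTop hβ).comp tendsto_natCast_atTop_atTop
  filter_upwards [eventually_gt_atTop 0, hHc.eventually_norm_sub_le hη,
    hFc.eventually_norm_sub_le hη,
    (hq.mul_const (CF + CA)).eventually_le_const (by simp : (0 : ℝ) * (CF + CA) < 1),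
    ((hq.const_mul C).mul_const ((CF + CA) ^ 2)).eventually_le_const
      (by simpa using hη : C * 0 * (CF + CA) ^ 2 < η)]
    with L hL hHL hFL hqD hqη t ht
  obtain ⟨hkL, hk⟩ := floor_mul_le_and_abs_sub_le hL ht
  have hsmall : (η + C * (L : ℝ) ^ (-β) * (CF + CA) ^ 2) * e ≤ 2 * η * e := by
    gcongr; linarith
  have hgrid := norm_sub_grid_le hσ hαβ hH hL (hh0 L) (hrec L) hCA hD hFL hqD
    (hsmall.trans (by linarith [min_le_right ε 1])) _ hkL
  calc ‖H t - h L ⌊(L : ℝ) * t⌋₊‖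
      ≤ ‖H t - H (⌊(L : ℝ) * t⌋₊ / L)‖ + ‖H (⌊(L : ℝ) * t⌋₊ / L) - h L ⌊(L : ℝ) * t⌋₊‖ :=
        norm_sub_le_norm_sub_add_norm_sub _ _ _
    _ ≤ η + 2 * η * e := add_le_add (hHL t ht _ (grid_mem_Icc hkL) hk) (hgrid.trans hsmall)
    _ ≤ ε := by linarith [min_le_left ε 1]

end ResidualNetwork

theorem linear_ode_limit_regime1_general
    (d : ℕ) (x : EuclideanSpace ℝ (Fin d))
    -- activation function
    (σ : ℝ → ℝ) (hσC3 : ContDiff ℝ 3 σ) (hσ0 : σ 0 = 0) (hσ'0 : deriv σ 0 = 1)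
    -- scaling exponents
    (α β : ℝ) (hβ : 0 < β) (hαβ : α + β = 1)
    -- weights: Ā, b̄ continuous and κ/2-Hölder on [0,1]
    (Abar : ℝ → (EuclideanSpace ℝ (Fin d) →L[ℝ] EuclideanSpace ℝ (Fin d)))
    (bbar : ℝ → EuclideanSpace ℝ (Fin d))
    (hAc : ContinuousOn Abar (Icc (0:ℝ) 1))
    (hbc : ContinuousOn bbar (Icc (0:ℝ) 1))
    -- hidden states of the residual network of depth L
    (h : ℕ → ℕ → EuclideanSpace ℝ (Fin d))
    (hh0 : ∀ L : ℕ, h L 0 = x)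
    (hhrec : ∀ L : ℕ, ∀ k < L, h L (k+1) =
      h L k + ((L:ℝ) ^ (-α)) •
        sigd σ (((L:ℝ) ^ (-β)) • (Abar ((k:ℝ)/(L:ℝ)) (h L k) + bbar ((k:ℝ)/(L:ℝ)))))
    -- solution of the linear ODE
    (H : ℝ → EuclideanSpace ℝ (Fin d)) (hH0 : H 0 = x)
    (hHode : ∀ t ∈ Icc (0:ℝ) 1, HasDerivAt H (Abar t (H t) + bbar t) t) :
    Tendsto (fun L : ℕ => ⨆ t : Icc (0:ℝ) 1, ‖H t - h L ⌊(L:ℝ) * (t:ℝ)⌋₊‖)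
      atTop (nhds 0) := by
  obtain ⟨C, hC⟩ := exists_abs_sub_self_le_mul_sq (hσC3.of_le (by norm_num)) hσ0 hσ'0
  refine Metric.tendsto_nhds.2 fun ε hε => ?_
  filter_upwards [eventually_norm_sub_floor_le hC hαβ hβ hAc hbc hHode
    (fun L => (hh0 L).trans hH0.symm) hhrec (half_pos hε)] with L hL
  have : Nonempty (Icc (0 : ℝ) 1) := ⟨⟨0, by simp⟩⟩
  have hsup : ⨆ t : Icc (0 : ℝ) 1, ‖H t - h L ⌊(L : ℝ) * t⌋₊‖ ≤ ε / 2 :=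
    ciSup_le fun t => hL t.1 t.2
  have hsup0 : 0 ≤ ⨆ t : Icc (0 : ℝ) 1, ‖H t - h L ⌊(L : ℝ) * t⌋₊‖ :=
    Real.iSup_nonneg fun t => norm_nonneg _
  rw [Real.dist_0_eq_abs, abs_of_nonneg hsup0]
  linarith

/-- **Linear ODE limit under Scaling regime 1 (Theorem 4.2, second case).**
Let `σ ∈ C³` with `σ(0) = 0`, `σ'(0) = 1`, bounded third derivative, `σ` Lipschitz.
Let `α, β > 0` with `α + β = 1`, and let `Ā`, `b̄` be continuous and `κ/2`-Hölder on `[0,1]`.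
Then the piecewise-constant interpolation of the hidden states
`h^{(L)}_{k+1} = h^{(L)}_k + L^{-α} σ_d(L^{-β}(Ā_{k/L} h^{(L)}_k + b̄_{k/L}))`, `h^{(L)}_0 = x`,
converges uniformly on `[0,1]` to the solution `H` of the linear ODE
`dH_t/dt = Ā_t H_t + b̄_t`, `H_0 = x`. -/
theorem linear_ode_limit_regime1
    (d : ℕ) (hd : 1 ≤ d) (x : EuclideanSpace ℝ (Fin d))
    -- activation function
    (σ : ℝ → ℝ) (hσC3 : ContDiff ℝ 3 σ) (hσ0 : σ 0 = 0) (hσ'0 : deriv σ 0 = 1)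
    (C3 : ℝ) (hσ3 : ∀ y : ℝ, |iteratedDeriv 3 σ y| ≤ C3)
    (K : NNReal) (hσLip : LipschitzWith K σ)
    -- scaling exponents
    (α β : ℝ) (hα : 0 < α) (hβ : 0 < β) (hαβ : α + β = 1)
    -- weights: Ā, b̄ continuous and κ/2-Hölder on [0,1]
    (Abar : ℝ → (EuclideanSpace ℝ (Fin d) →L[ℝ] EuclideanSpace ℝ (Fin d)))
    (bbar : ℝ → EuclideanSpace ℝ (Fin d))
    (hAc : ContinuousOn Abar (Icc (0:ℝ) 1))
    (hbc : ContinuousOn bbar (Icc (0:ℝ) 1))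
    (M κ : ℝ) (hM : 0 < M) (hκ : 0 < κ)
    (hHolder : ∀ s ∈ Icc (0:ℝ) 1, ∀ t ∈ Icc (0:ℝ) 1,
      ‖Abar t - Abar s‖ + ‖bbar t - bbar s‖ ≤ M * |t - s| ^ (κ/2))
    -- hidden states of the residual network of depth L
    (h : ℕ → ℕ → EuclideanSpace ℝ (Fin d))
    (hh0 : ∀ L : ℕ, h L 0 = x)
    (hhrec : ∀ L : ℕ, ∀ k < L, h L (k+1) =
      h L k + ((L:ℝ) ^ (-α)) •
        sigd σ (((L:ℝ) ^ (-β)) • (Abar ((k:ℝ)/(L:ℝ)) (h L k) + bbar ((k:ℝ)/(L:ℝ)))))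
    -- solution of the linear ODE
    (H : ℝ → EuclideanSpace ℝ (Fin d)) (hH0 : H 0 = x)
    (hHode : ∀ t ∈ Icc (0:ℝ) 1, HasDerivAt H (Abar t (H t) + bbar t) t) :
    Tendsto (fun L : ℕ => ⨆ t : Icc (0:ℝ) 1, ‖H t - h L ⌊(L:ℝ) * (t:ℝ)⌋₊‖)
      atTop (nhds 0) :=
  linear_ode_limit_regime1_general d x σ hσC3 hσ0 hσ'0 α β hβ hαβ Abar bbar hAc hbc h hh0 hhrec H
    hH0 hHode
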